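/- arXiv:2411.11103 — 6 statements merged into one kernel-verified Lean document; each statement's English description precedes it below -/
import Mathlib

section
/- There exists no non-square integer d > 1 for which there are two indices 1 ≤ l₁ < l₂ and non-negative integers a₁ ≤ a₂ and b₁ ≤ b₂ such that X_{l₁} = 2^{a₁}·3^{a₂} and X_{l₂} = 2^{b₁}·3^{b₂}. Equivalently, for each non-square d > 1, the equation X_l = 2^{n₁}·3^{n₂} with n₁ ≤ n₂ has at most one positive integer solution (l, n₁, n₂). -/
namespace Stmt1Aux

/-- Chebyshev-type integer sequence with parameter `x`. -/
def Zseq (x : ℤ) : ℕ → ℤ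
  | 0 => 1
  | 1 => x
  | (n+2) => 2*x*Zseq x (n+1) - Zseq x n

lemma Zseq_zero (x : ℤ) : Zseq x 0 = 1 := rfl
lemma Zseq_one (x : ℤ) : Zseq x 1 = x := rfl
lemma Zseq_rec (x : ℤ) (n : ℕ) : Zseq x (n+2) = 2*x*Zseq x (n+1) - Zseq x n := rfl

/-- mod z³ expansion of a Chebyshev-type sequence. -/
lemma cheb_expansion (z : ℤ) (V : ℕ → ℤ) (h0 : V 0 = 1) (h1 : V 1 = z)
    (hrec : ∀ j, V (j+2) = 2*z*V (j+1) - V j) :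
    ∀ j : ℕ, (∃ s, V (2*j) = (-1)^j + z^2*s) ∧
         (∃ t, V (2*j+1) = (-1)^j*(2*(j:ℤ)+1)*z + z^3*t) := by
  intro j
  induction j with
  | zero =>
    exact ⟨⟨0, by simp [h0]⟩, ⟨0, by simp [h1]⟩⟩
  | succ j ih =>
    obtain ⟨⟨s, hs⟩, ⟨t, ht⟩⟩ := ih
    have e1 : 2*(j+1) = (2*j) + 2 := by ring
    have e2 : 2*(j+1)+1 = (2*j+1) + 2 := by ring
    have he : V (2*(j+1)) = (-1)^(j+1) + z^2*(2*(-1)^j*(2*(j:ℤ)+1) - s + 2*z^2*t) := by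
      rw [e1, hrec, hs, ht]; push_cast; ring
    refine ⟨⟨_, he⟩, ⟨2*(2*(-1)^j*(2*(j:ℤ)+1) - s + 2*z^2*t) - t, ?_⟩⟩
    have e3 : 2*j+1+1 = 2*(j+1) := by ring
    rw [e2, hrec, ht, e3, he]; push_cast; ring

lemma exists_pow_factor (p : ℤ) (hp : 2 ≤ p) : ∀ n : ℤ, n ≠ 0 →
    ∃ c : ℕ, ∃ u : ℤ, n = p ^ c * u ∧ ¬ p ∣ u := by
  intro n hn
  by_cases h : p ∣ n
  · obtain ⟨m, hm⟩ := h
    have hm0 : m ≠ 0 := by rintro rfl; simp at hm; exact hn hm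
    have hlt : m.natAbs < n.natAbs := by
      rw [hm, Int.natAbs_mul]
      have h1 : 1 ≤ m.natAbs := Int.natAbs_pos.mpr hm0
      have h2 : 2 ≤ p.natAbs := by
        have := Int.natAbs_of_nonneg (by omega : (0:ℤ) ≤ p)
        omega
      nlinarith
    obtain ⟨c, u, h1, h2⟩ := exists_pow_factor p hp m hm0
    exact ⟨c+1, u, by rw [hm, h1]; ring, h2⟩
  · exact ⟨0, n, by ring, h⟩
termination_by n => n.natAbs

lemma pow_factor_le (p : ℤ) (hp : 2 ≤ p) (a b : ℕ) (u v : ℤ) (hu : ¬ p ∣ u)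
    (h : p ^ a * u = p ^ b * v) : b ≤ a := by
  by_contra hba
  push_neg at hba
  have h2 : p ^ a * u = p ^ a * (p ^ (b - a) * v) := by
    rw [h, ← mul_assoc, ← pow_add]
    congr 2
    omega
  have hpa : (p:ℤ)^a ≠ 0 := pow_ne_zero _ (by omega)
  have hu' : u = p ^ (b-a) * v := mul_left_cancel₀ hpa h2
  have : p ∣ p ^ (b-a) := dvd_pow_self p (by omega)
  exact hu (hu' ▸ this.mul_right v)

lemma two_mul_le_pow1 : ∀ n : ℕ, 2*(n+4) ≤ 3^(n+2) := by
  intro n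
  induction n with
  | zero => norm_num
  | succ n ih =>
    have h3 : (3:ℕ)^(n+1+2) = 3*3^(n+2) := by ring
    have h0 : 1 ≤ (3:ℕ)^(n+2) := Nat.one_le_pow _ _ (by norm_num)
    omega

lemma two_mul_le_pow2 : ∀ n : ℕ, 2*(n+3) ≤ 3^(2*n+3) := by
  intro n
  induction n with
  | zero => norm_num
  | succ n ih =>
    have h3 : (3:ℕ)^(2*(n+1)+3) = 9*3^(2*n+3) := by ring
    have h0 : 1 ≤ (3:ℕ)^(2*n+3) := Nat.one_le_pow _ _ (by norm_num)
    omega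

lemma key_nat (k m : ℕ) (hk : 1 ≤ k) (hm : 3 ≤ m) (hne : ¬(k = 1 ∧ m = 3)) :
    2*m ≤ 3^(k*m - k - 1) := by
  rcases Nat.lt_or_ge k 2 with hk2 | hk2
  · have hk1 : k = 1 := by omega
    subst hk1
    have hm4 : 4 ≤ m := by
      rcases Nat.lt_or_ge m 4 with h | h
      · exact absurd ⟨rfl, by omega⟩ hne
      · exact h
    have h := two_mul_le_pow1 (m - 4)
    have e1 : m - 4 + 4 = m := by omega
    have e2 : 1*m - 1 - 1 = m - 4 + 2 := by omega
    rw [e1] at h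
    rw [e2]
    exact h
  · obtain ⟨K, rfl⟩ : ∃ K, k = K + 2 := ⟨k - 2, by omega⟩
    have h := two_mul_le_pow2 (m - 3)
    have e1 : m - 3 + 3 = m := by omega
    rw [e1] at h
    refine le_trans h (Nat.pow_le_pow_right (by norm_num) ?_)
    have h2 : 3*K ≤ m*K := Nat.mul_le_mul_right K hm
    have e3 : (K+2)*m = K*m + 2*m := by ring
    have e4 : m*K = K*m := Nat.mul_comm m K
    omega

end Stmt1Aux

set_option maxHeartbeats 1000000 in
open Stmt1Aux in
/-- There exists no non-square `d > 1` with two indices `1 ≤ l₁ < l₂` such that both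
`X_l₁ = 2^a₁·3^a₂` (with `a₁ ≤ a₂`) and `X_l₂ = 2^b₁·3^b₂` (with `b₁ ≤ b₂`). -/
theorem stmt_1
    (d : ℤ) (hd : 1 < d) (hd' : ¬ IsSquare d)
    (X₁ Y₁ : ℤ) (hX₁ : 0 < X₁) (hY₁ : 0 < Y₁)
    (hPell : X₁ ^ 2 - d * Y₁ ^ 2 = 1)
    (hfund : ∀ x y : ℤ, 0 < x → 0 < y → x ^ 2 - d * y ^ 2 = 1 → X₁ ≤ x)
    (γ : ℝ) (hγ : γ = (X₁ : ℝ) + (Y₁ : ℝ) * Real.sqrt (d : ℝ))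
    (X : ℕ → ℤ) (hX : ∀ l : ℕ, 1 ≤ l → (X l : ℝ) = (γ ^ l + γ⁻¹ ^ l) / 2) :
    ¬ ∃ (l₁ l₂ a₁ a₂ b₁ b₂ : ℕ),
        1 ≤ l₁ ∧ l₁ < l₂ ∧ a₁ ≤ a₂ ∧ b₁ ≤ b₂ ∧
        X l₁ = 2 ^ a₁ * 3 ^ a₂ ∧ X l₂ = 2 ^ b₁ * 3 ^ b₂ := by
  classical
  rintro ⟨l₁, l₂, a₁, a₂, b₁, b₂, hl₁, hl₁₂, ha, hb, hXl₁, hXl₂⟩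
  have hd2 : (2:ℤ) ≤ d := by omega
  have hy1 : (1:ℤ) ≤ Y₁ := hY₁
  have hy2 : (1:ℤ) ≤ Y₁^2 := by nlinarith only [hy1]
  have hdy2 : (2:ℤ) ≤ d*Y₁^2 := by nlinarith only [hd2, hy2]
  have hx2 : (2:ℤ) ≤ X₁ := by nlinarith only [hPell, hdy2, hX₁]
  set sd := Real.sqrt (d:ℝ) with hsddef
  have hdR : (1:ℝ) < (d:ℝ) := by exact_mod_cast hd
  have hsd2 : sd^2 = (d:ℝ) := Real.sq_sqrt (by linarith only [hdR])
  have hsd1 : 1 < sd := by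
    rw [hsddef, show (1:ℝ) = Real.sqrt 1 by simp]
    exact Real.sqrt_lt_sqrt (by norm_num) hdR
  have hxR : (2:ℝ) ≤ (X₁:ℝ) := by exact_mod_cast hx2
  have hyR : (1:ℝ) ≤ (Y₁:ℝ) := by exact_mod_cast hy1
  have hsdy : sd ≤ (Y₁:ℝ)*sd := le_mul_of_one_le_left (by linarith only [hsd1]) hyR
  have hγ3 : 3 < γ := by rw [hγ]; linarith only [hxR, hsd1, hsdy]
  have hγpos : 0 < γ := by linarith only [hγ3]
  obtain ⟨η, hηdef⟩ : ∃ η : ℝ, η = (X₁:ℝ) - (Y₁:ℝ)*sd := ⟨_, rfl⟩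
  have hPellR : (X₁:ℝ)^2 - (d:ℝ)*(Y₁:ℝ)^2 = 1 := by exact_mod_cast hPell
  have hprod : γ * η = 1 := by
    rw [hγ, hηdef]
    linear_combination hPellR - (Y₁:ℝ)^2 * hsd2
  have hsum : γ + η = 2*(X₁:ℝ) := by rw [hγ, hηdef]; ring
  have hγne : γ ≠ 0 := ne_of_gt hγpos
  have hinv : γ⁻¹ = η := inv_eq_of_mul_eq_one_right hprod
  have hηpos : 0 < η := by rw [← hinv]; positivity
  have hηlt : η < 1 := by
    rw [← hinv]
    exact inv_lt_one_of_one_lt₀ (by linarith only [hγ3])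
  -- the integer sequence
  have hZR : ∀ l : ℕ, ((Zseq X₁ l : ℤ) : ℝ) = (γ^l + η^l)/2 := by
    have key : ∀ l : ℕ, (((Zseq X₁ l : ℤ):ℝ) = (γ^l + η^l)/2) ∧
        (((Zseq X₁ (l+1) : ℤ):ℝ) = (γ^(l+1) + η^(l+1))/2) := by
      intro l
      induction l with
      | zero =>
        constructor
        · rw [Zseq_zero]; norm_num
        · rw [Zseq_one, pow_one, pow_one]; linarith only [hsum]
      | succ l ih =>
        refine ⟨ih.2, ?_⟩
        rw [Zseq_rec]
        push_cast
        rw [ih.1, ih.2]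
        linear_combination (-((γ^(l+1)+η^(l+1))/2))*hsum + ((γ^l+η^l)/2)*hprod
    exact fun l => (key l).1
  have hXZ : ∀ l, 1 ≤ l → X l = Zseq X₁ l := by
    intro l hl
    have h1 := hX l hl
    rw [hinv] at h1
    have h2 := hZR l
    exact_mod_cast h1.trans h2.symm
  -- key identity
  have hI : ∀ n t : ℕ, Zseq X₁ (2*n + t) = 2 * Zseq X₁ (n+t) * Zseq X₁ n - Zseq X₁ t := by
    intro n t
    have hpn : (γ*η)^n = 1 := by rw [hprod, one_pow]
    have hr : ((Zseq X₁ (2*n+t) : ℤ) : ℝ) =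
        ((2 * Zseq X₁ (n+t) * Zseq X₁ n - Zseq X₁ t : ℤ) : ℝ) := by
      push_cast
      rw [hZR, hZR, hZR, hZR]
      linear_combination (-((γ^t+η^t)/2)) * hpn
    exact_mod_cast hr
  -- positivity and size
  have hZpos : ∀ l, (0:ℤ) < Zseq X₁ l := by
    intro l
    have h : (0:ℝ) < ((Zseq X₁ l : ℤ):ℝ) := by
      rw [hZR]; positivity
    exact_mod_cast h
  have hZ2 : ∀ l, 1 ≤ l → (2:ℤ) ≤ Zseq X₁ l := by
    intro l hl
    have hγl : γ ≤ γ^l := le_self_pow₀ (by linarith only [hγ3]) (by omega)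
    have h : (3/2:ℝ) < ((Zseq X₁ l : ℤ):ℝ) := by
      rw [hZR]
      have hηl := pow_pos hηpos l
      linarith only [hγl, hηl, hγ3]
    have h1 : (1:ℤ) < Zseq X₁ l := by
      exact_mod_cast (by linarith only [h] : (1:ℝ) < ((Zseq X₁ l : ℤ):ℝ))
    omega
  have hZle : ∀ l, ((Zseq X₁ l : ℤ):ℝ) ≤ γ^l := by
    intro l
    rw [hZR]
    have h1 : η^l ≤ γ^l := pow_le_pow_left₀ hηpos.le (by linarith only [hηlt, hγ3]) l
    linarith only [h1]
  have hZlt : ∀ l, γ^l < 2*((Zseq X₁ l : ℤ):ℝ) := by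
    intro l
    rw [hZR]
    have h1 := pow_pos hηpos l
    linarith only [h1]
  -- rewrite hypotheses in terms of Zseq
  have hl₂1 : 1 ≤ l₂ := by omega
  have hZl₁ : Zseq X₁ l₁ = 2^a₁*3^a₂ := by rw [← hXZ l₁ hl₁]; exact hXl₁
  have hZl₂ : Zseq X₁ l₂ = 2^b₁*3^b₂ := by rw [← hXZ l₂ hl₂1]; exact hXl₂
  have ha₂1 : 1 ≤ a₂ := by
    rcases Nat.eq_zero_or_pos a₂ with h0 | h
    · exfalso
      have ha1 : a₁ = 0 := by omega
      rw [ha1, h0] at hZl₁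
      have := hZ2 l₁ hl₁
      norm_num at hZl₁
      omega
    · exact h
  have hb₂1 : 1 ≤ b₂ := by
    rcases Nat.eq_zero_or_pos b₂ with h0 | h
    · exfalso
      have hb1 : b₁ = 0 := by omega
      rw [hb1, h0] at hZl₂
      have := hZ2 l₂ hl₂1
      norm_num at hZl₂
      omega
    · exact h
  have h3Zl₁ : (3:ℤ) ∣ Zseq X₁ l₁ := by
    rw [hZl₁]; exact dvd_mul_of_dvd_right (dvd_pow_self 3 (by omega)) _
  have h3Zl₂ : (3:ℤ) ∣ Zseq X₁ l₂ := by
    rw [hZl₂]; exact dvd_mul_of_dvd_right (dvd_pow_self 3 (by omega)) _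
  -- the rank of apparition of 3
  have hex : ∃ l, 1 ≤ l ∧ (3:ℤ) ∣ Zseq X₁ l := ⟨l₁, hl₁, h3Zl₁⟩
  obtain ⟨k, ⟨hk1, hk3⟩, hkmin⟩ : ∃ k, (1 ≤ k ∧ (3:ℤ) ∣ Zseq X₁ k) ∧
      ∀ j, j < k → ¬(1 ≤ j ∧ (3:ℤ) ∣ Zseq X₁ j) :=
    ⟨Nat.find hex, Nat.find_spec hex, fun j hj => Nat.find_min hex hj⟩
  have hodd : ∀ l, (3:ℤ) ∣ Zseq X₁ l → ∃ q, l = k*(2*q+1) := by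
    intro l
    induction l using Nat.strong_induction_on with
    | _ l ih =>
      intro h3
      rcases Nat.lt_or_ge l k with hlk | hlk
      · exfalso
        have hl1 : 1 ≤ l := by
          rcases Nat.eq_zero_or_pos l with rfl | h
          · rw [Zseq_zero] at h3; norm_num at h3
          · exact h
        exact hkmin l hlk ⟨hl1, h3⟩
      · rcases Nat.lt_or_ge l (2*k) with hl2k | hl2k
        · rcases Nat.eq_or_lt_of_le hlk with heq | hlt
          · refine ⟨0, ?_⟩
            omega
          · exfalso
            have hj1 : 1 ≤ l - k := by omega
            have hjk : l - k < k := by omega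
            have h := hI (l-k) (k - (l-k))
            have e1 : 2*(l-k) + (k-(l-k)) = l := by omega
            have e2 : (l-k) + (k-(l-k)) = k := by omega
            rw [e1, e2] at h
            have h3' : (3:ℤ) ∣ Zseq X₁ (k-(l-k)) := by
              have h1 : Zseq X₁ (k-(l-k)) = 2 * Zseq X₁ k * Zseq X₁ (l-k) - Zseq X₁ l := by
                linear_combination h
              rw [h1]
              exact dvd_sub ((hk3.mul_left 2).mul_right _) h3
            exact hkmin (k-(l-k)) (by omega) ⟨by omega, h3'⟩
        · have h := hI k (l - 2*k)
          have e1 : 2*k + (l-2*k) = l := by omega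
          rw [e1] at h
          have h3' : (3:ℤ) ∣ Zseq X₁ (l-2*k) := by
            have h1 : Zseq X₁ (l-2*k) = 2 * Zseq X₁ (k+(l-2*k)) * Zseq X₁ k - Zseq X₁ l := by
              linear_combination h
            rw [h1]
            exact dvd_sub (hk3.mul_left _) h3
          obtain ⟨q, hq⟩ := ih (l - 2*k) (by omega) h3'
          refine ⟨q+1, ?_⟩
          rw [show k*(2*(q+1)+1) = 2*k + k*(2*q+1) by ring]
          omega
  -- subsequence at multiples of k
  have hWrec : ∀ j, Zseq X₁ (k*(j+2)) = 2*(Zseq X₁ k)*(Zseq X₁ (k*(j+1))) - Zseq X₁ (k*j) := by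
    intro j
    have h := hI k (k*j)
    have e1 : 2*k + k*j = k*(j+2) := by ring
    have e2 : k + k*j = k*(j+1) := by ring
    rw [e1, e2] at h
    linear_combination h
  have hW0 : Zseq X₁ (k*0) = 1 := by rw [Nat.mul_zero, Zseq_zero]
  have hW1 : Zseq X₁ (k*1) = Zseq X₁ k := by rw [Nat.mul_one]
  have hcheb := cheb_expansion (Zseq X₁ k) (fun j => Zseq X₁ (k*j)) hW0 hW1 hWrec
  have hW3 : ∀ j, Zseq X₁ (k*(3*j)) = 4*(Zseq X₁ (k*j))^3 - 3*(Zseq X₁ (k*j)) := by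
    intro j
    have h2 := hI (k*j) 0
    have e1 : 2*(k*j) + 0 = k*(2*j) := by ring
    have e2 : k*j + 0 = k*j := by ring
    rw [e1, e2, Zseq_zero] at h2
    have h3 := hI (k*j) (k*j)
    have e3 : 2*(k*j) + k*j = k*(3*j) := by ring
    have e4 : k*j + k*j = k*(2*j) := by ring
    rw [e3, e4] at h3
    linear_combination h3 + 2*(Zseq X₁ (k*j))*h2
  -- 3-adic valuation data
  have h3p : Prime (3:ℤ) := Int.prime_three
  have hzne : Zseq X₁ k ≠ 0 := ne_of_gt (hZpos k)
  obtain ⟨c, u, hzc, hu3⟩ := exists_pow_factor 3 (by norm_num) (Zseq X₁ k) hzne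
  have hc1 : 1 ≤ c := by
    rcases Nat.eq_zero_or_pos c with h0 | h
    · exfalso
      rw [h0, pow_zero, one_mul] at hzc
      exact hu3 (hzc ▸ hk3)
    · exact h
  have hv3 : ∀ e : ℕ, ∀ m : ℕ, m % 2 = 1 → ∀ w : ℤ, (m:ℤ) = 3^e * w → ¬ (3:ℤ) ∣ w →
      ∃ U, Zseq X₁ (k*m) = 3^(c+e) * U ∧ ¬ (3:ℤ) ∣ U := by
    intro e
    induction e with
    | zero =>
      intro m hm w hw hw3
      obtain ⟨q, hq⟩ : ∃ q, m = 2*q+1 := ⟨m/2, by omega⟩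
      obtain ⟨-, t, ht⟩ := hcheb q
      have hqZ : (m:ℤ) = 2*(q:ℤ)+1 := by exact_mod_cast hq
      have hm3 : ¬ (3:ℤ) ∣ (m:ℤ) := by
        rw [pow_zero, one_mul] at hw
        rw [hw]; exact hw3
      refine ⟨(-1)^q*(m:ℤ)*u + 3^(2*c)*(u^3*t), ?_, ?_⟩
      · rw [hq, ht, hzc, ← hq, hqZ]
        ring
      · intro hdvd
        have h1 : (3:ℤ) ∣ 3^(2*c)*(u^3*t) := dvd_mul_of_dvd_left (dvd_pow_self 3 (by omega)) _
        have h2 : (3:ℤ) ∣ (-1)^q*(m:ℤ)*u := by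
          have h3 := dvd_sub hdvd h1
          simpa using h3
        rcases h3p.dvd_mul.mp h2 with h4 | h4
        · rcases h3p.dvd_mul.mp h4 with h5 | h5
          · rcases Nat.even_or_odd q with h6 | h6
            · rw [h6.neg_one_pow] at h5; norm_num at h5
            · rw [h6.neg_one_pow] at h5
              have : (3:ℤ) ∣ 1 := (dvd_neg.mp h5)
              norm_num at this
          · exact hm3 h5
        · exact hu3 h4
    | succ e ihe =>
      intro m hm w hw hw3
      have h3m : 3 ∣ m := by
        have h1 : (3:ℤ) ∣ (m:ℤ) := by
          rw [hw]; exact Dvd.dvd.mul_right (dvd_pow_self 3 (by omega)) _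
        exact_mod_cast h1
      obtain ⟨j, rfl⟩ := h3m
      have hj : (j:ℤ) = 3^e * w := by
        have h1 : (3:ℤ)*(j:ℤ) = 3*(3^e*w) := by
          push_cast at hw
          rw [pow_succ] at hw
          linear_combination hw
        exact mul_left_cancel₀ (by norm_num) h1
      obtain ⟨V, hV, hV3⟩ := ihe j (by omega) w hj hw3
      have hf1 : 1 ≤ c + e := by omega
      have hA1 : (3:ℝ) = 3 := rfl
      refine ⟨V*(4*3^(2*(c+e)-1)*V^2 - 1), ?_, ?_⟩
      · have h3 := hW3 j
        rw [h3, hV]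
        have hAB : ((3:ℤ)^(c+e))^2 = 3*3^(2*(c+e)-1) := by
          rw [← pow_mul, show (c+e)*2 = (2*(c+e)-1)+1 by omega, pow_succ]
          ring
        have hA2 : (3:ℤ)^(c+(e+1)) = 3*3^(c+e) := by
          rw [show c+(e+1) = (c+e)+1 by ring, pow_succ]; ring
        rw [hA2]
        linear_combination (4*3^(c+e)*V^3) * hAB
      · intro hdvd
        rcases h3p.dvd_mul.mp hdvd with h4 | h4
        · exact hV3 h4
        · have h1 : (3:ℤ) ∣ 4*3^(2*(c+e)-1)*V^2 :=
            dvd_mul_of_dvd_left (dvd_mul_of_dvd_right (dvd_pow_self 3 (by omega)) 4) _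
          have h2 : (3:ℤ) ∣ 1 := by
            have h5 := dvd_sub h1 h4
            simpa using h5
          norm_num at h2
  -- decompose indices
  obtain ⟨q₁, hq₁⟩ := hodd l₁ h3Zl₁
  obtain ⟨q₂, hq₂⟩ := hodd l₂ h3Zl₂
  set m₂ := 2*q₂+1 with hm₂def
  have hkl₁ : k ≤ l₁ := by
    rw [hq₁]; exact Nat.le_mul_of_pos_right k (by omega)
  have hm₂3 : 3 ≤ m₂ := by
    rcases Nat.eq_zero_or_pos q₂ with rfl | h
    · exfalso
      have : l₂ = k := by rw [hq₂]; ring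
      omega
    · omega
  have hZl₂' : Zseq X₁ (k*m₂) = 2^b₁*3^b₂ := by rw [← hq₂]; exact hZl₂
  have hm₂ne : (m₂:ℤ) ≠ 0 := by exact_mod_cast (by omega : m₂ ≠ 0)
  obtain ⟨e, w, hmw, hw3⟩ := exists_pow_factor 3 (by norm_num) (m₂:ℤ) hm₂ne
  obtain ⟨U, hU, hU3⟩ := hv3 e m₂ (by omega) w hmw hw3
  have hb₂ce : b₂ ≤ c + e := by
    refine pow_factor_le 3 (by norm_num) (c+e) b₂ U (2^b₁) hU3 ?_
    rw [← hU, hZl₂']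
    ring
  -- bound on the power of 2
  have hb₁x : (2:ℤ)^b₁ ≤ X₁ := by
    rcases Int.even_or_odd X₁ with hxe | hxo
    · rcases Nat.even_or_odd l₂ with hle | hlo
      · -- l₂ even : Zseq l₂ odd
        obtain ⟨r, hr⟩ := hle
        have h := hI r 0
        have e1 : 2*r + 0 = l₂ := by omega
        have e2 : r + 0 = r := rfl
        rw [e1, e2, Zseq_zero] at h
        have hodd2 : ¬ (2:ℤ) ∣ Zseq X₁ l₂ := by
          intro hdvd
          have h1 : (1:ℤ) = 2*(Zseq X₁ r*Zseq X₁ r) - Zseq X₁ l₂ := by linarith [h]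
          have h2 : (2:ℤ) ∣ 1 := by
            rw [h1]
            exact dvd_sub (Dvd.intro _ rfl) hdvd
          norm_num at h2
        have hb0 : b₁ = 0 := by
          by_contra hb0
          apply hodd2
          rw [hZl₂]
          exact dvd_mul_of_dvd_left (dvd_pow_self 2 hb0) _
        rw [hb0, pow_zero]; omega
      · -- l₂ odd
        obtain ⟨r, hr⟩ := hlo
        have hchZ := cheb_expansion X₁ (Zseq X₁) (Zseq_zero X₁) (Zseq_one X₁)
          (fun j => Zseq_rec X₁ j)
        obtain ⟨-, t, ht⟩ := hchZ r
        rw [← hr] at ht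
        obtain ⟨A, x', hxA, hx'⟩ := exists_pow_factor 2 (by norm_num) X₁ (by omega)
        have hA1 : 1 ≤ A := by
          rcases Nat.eq_zero_or_pos A with h0 | h
          · exfalso
            rw [h0, pow_zero, one_mul] at hxA
            obtain ⟨m, hm⟩ := hxe
            exact hx' (hxA ▸ ⟨m, by omega⟩)
          · exact h
        have hinner : Zseq X₁ l₂ = 2^A * ((-1)^r*(2*(r:ℤ)+1)*x' + 2^(2*A)*(x'^3*t)) := by
          rw [ht, hxA]; ring
        have h2p : Prime (2:ℤ) := Int.prime_two
        have hArw : ¬ (2:ℤ) ∣ ((-1)^r*(2*(r:ℤ)+1)*x' + 2^(2*A)*(x'^3*t)) := by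
          intro hdvd
          have h1 : (2:ℤ) ∣ 2^(2*A)*(x'^3*t) := dvd_mul_of_dvd_left (dvd_pow_self 2 (by omega)) _
          have h2 : (2:ℤ) ∣ (-1)^r*(2*(r:ℤ)+1)*x' := by
            have h3 := dvd_sub hdvd h1
            simpa using h3
          rcases h2p.dvd_mul.mp h2 with h3 | h3
          · rcases h2p.dvd_mul.mp h3 with h4 | h4
            · rcases Nat.even_or_odd r with h5 | h5
              · rw [h5.neg_one_pow] at h4; norm_num at h4
              · rw [h5.neg_one_pow] at h4
                have : (2:ℤ) ∣ 1 := dvd_neg.mp h4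
                norm_num at this
            · omega
          · exact hx' h3
        have hb₁A : b₁ ≤ A := by
          refine pow_factor_le 2 (by norm_num) A b₁ _ (3^b₂) hArw ?_
          rw [← hinner, hZl₂]
        have hx'1 : (1:ℤ) ≤ x' := by
          by_contra hcon
          push_neg at hcon
          have h2A : (0:ℤ) < 2^A := pow_pos (by norm_num) A
          have h1 : (2:ℤ)^A*x' ≤ 0 := mul_nonpos_iff.mpr (Or.inl ⟨h2A.le, by omega⟩)
          linarith only [h1, hxA, hx2]
        calc (2:ℤ)^b₁ ≤ 2^A := pow_le_pow_right₀ (by norm_num) hb₁A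
          _ ≤ X₁ := by
            rw [hxA]
            exact le_mul_of_one_le_right (pow_pos (show (0:ℤ)<2 by norm_num) A).le hx'1
    · -- X₁ odd : all terms odd
      have hallodd : ∀ j, ¬ (2:ℤ) ∣ Zseq X₁ j ∧ ¬ (2:ℤ) ∣ Zseq X₁ (j+1) := by
        intro j
        induction j with
        | zero =>
          constructor
          · rw [Zseq_zero]; norm_num
          · rw [Zseq_one]
            obtain ⟨m, hm⟩ := hxo
            omega
        | succ j ih =>
          refine ⟨ih.2, ?_⟩
          rw [Zseq_rec]
          intro hdvd
          apply ih.1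
          have h1 : (2:ℤ) ∣ 2*X₁*Zseq X₁ (j+1) := dvd_mul_of_dvd_left (dvd_mul_right 2 X₁) _
          have h2 := dvd_sub h1 hdvd
          simpa using h2
      have hb0 : b₁ = 0 := by
        by_contra hb0
        exact (hallodd l₂).1 (by rw [hZl₂]; exact dvd_mul_of_dvd_left (dvd_pow_self 2 hb0) _)
      rw [hb0, pow_zero]; omega
  -- size bounds
  have hu1 : (1:ℤ) ≤ u := by
    by_contra hcon
    push_neg at hcon
    have h3c : (0:ℤ) < 3^c := pow_pos (by norm_num) c
    have h1 : (3:ℤ)^c*u ≤ 0 := mul_nonpos_iff.mpr (Or.inl ⟨h3c.le, by omega⟩)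
    have h2 := hZ2 k hk1
    linarith only [h1, h2, hzc]
  have hzc3 : (3:ℤ)^c ≤ Zseq X₁ k := by
    rw [hzc]
    exact le_mul_of_one_le_right (pow_pos (show (0:ℤ)<3 by norm_num) c).le hu1
  have hw1 : (1:ℤ) ≤ w := by
    by_contra hcon
    push_neg at hcon
    have h3e : (0:ℤ) < 3^e := pow_pos (by norm_num) e
    have hm₂Z : (3:ℤ) ≤ (m₂:ℤ) := by exact_mod_cast hm₂3
    have h1 : (3:ℤ)^e*w ≤ 0 := mul_nonpos_iff.mpr (Or.inl ⟨h3e.le, by omega⟩)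
    linarith only [h1, hm₂Z, hmw]
  have he3 : (3:ℤ)^e ≤ (m₂:ℤ) := by
    rw [hmw]
    exact le_mul_of_one_le_right (pow_pos (show (0:ℤ)<3 by norm_num) e).le hw1
  -- terminal small case vs growth contradiction
  by_cases hcase : k = 1 ∧ m₂ = 3
  · -- k = 1, m₂ = 3: l₂ = 3, l₁ = 1
    obtain ⟨hk1', hm₂'⟩ := hcase
    have hl₂3 : l₂ = 3 := by rw [hq₂, hk1', hm₂']
    have hl₁1 : l₁ = 1 := by
      have h1 : l₁ = 2*q₁+1 := by rw [hq₁, hk1']; ring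
      omega
    have hxeq : X₁ = 2^a₁*3^a₂ := by
      rw [← Zseq_one X₁, ← hl₁1]
      exact hZl₁
    have hx3 : (3:ℤ) ∣ X₁ := by
      rw [hxeq]; exact dvd_mul_of_dvd_right (dvd_pow_self 3 (by omega)) _
    have hx3' : (3:ℤ) ≤ X₁ := Int.le_of_dvd (by omega) hx3
    obtain ⟨x₀, hx₀⟩ := hx3
    have hZ2' : Zseq X₁ 2 = 2*X₁*Zseq X₁ 1 - Zseq X₁ 0 := Zseq_rec X₁ 0
    have hZ3' : Zseq X₁ 3 = 2*X₁*Zseq X₁ 2 - Zseq X₁ 1 := Zseq_rec X₁ 1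
    have hZ3 : Zseq X₁ 3 = 4*X₁^3 - 3*X₁ := by
      rw [hZ3', hZ2', Zseq_one, Zseq_zero]; ring
    have hZl₂3 : 4*X₁^3 - 3*X₁ = 2^b₁*3^b₂ := by
      rw [← hZ3, ← hl₂3]; exact hZl₂
    have h9x : (9:ℤ) ≤ X₁^2 := by
      have h1 := mul_le_mul hx3' hx3' (by norm_num : (0:ℤ) ≤ 3) (by omega : (0:ℤ) ≤ X₁)
      rw [pow_two]
      linarith only [h1]
    set D : ℤ := 4*X₁^2 - 3 with hDdef
    have hDpos : (0:ℤ) < D := by rw [hDdef]; linarith only [h9x]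
    have hDdvd : D ∣ (2^b₁*3^b₂ : ℤ) := ⟨X₁, by linear_combination -hZl₂3⟩
    set Dn : ℕ := D.toNat with hDndef
    have hDn : (Dn:ℤ) = D := Int.toNat_of_nonneg hDpos.le
    have hDn_dvd : Dn ∣ 2^b₁*3^b₂ := by
      have h1 : (Dn:ℤ) ∣ ((2^b₁*3^b₂ : ℕ):ℤ) := by
        push_cast
        rw [hDn]
        exact_mod_cast hDdvd
      exact_mod_cast h1
    have hDodd : ¬ 2 ∣ Dn := by
      intro h2
      have h2D : (2:ℤ) ∣ D := by
        rw [← hDn]; exact_mod_cast h2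
      have h4 : (2:ℤ) ∣ 4*X₁^2 := ⟨2*X₁^2, by ring⟩
      have h5 : (2:ℤ) ∣ 3 := by
        have := dvd_sub h4 h2D
        simpa [hDdef] using this
      norm_num at h5
    have hcop : Nat.Coprime Dn (2^b₁) :=
      Nat.Coprime.pow_right _ ((Nat.coprime_comm.mp ((Nat.Prime.coprime_iff_not_dvd Nat.prime_two).mpr hDodd)))
    have hdvd3n : Dn ∣ 3^b₂ := hcop.dvd_of_dvd_mul_left hDn_dvd
    obtain ⟨j, hj, hDj⟩ := (Nat.dvd_prime_pow Nat.prime_three).mp hdvd3n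
    rcases Nat.lt_or_ge j 2 with hj2 | hj2
    · -- Dn ≤ 3 but D ≥ 33
      have hDn3 : Dn ≤ 3 := by
        rw [hDj]
        calc (3:ℕ)^j ≤ 3^1 := Nat.pow_le_pow_right (by norm_num) (by omega)
          _ = 3 := by norm_num
      have hD3 : D ≤ 3 := by rw [← hDn]; exact_mod_cast hDn3
      rw [hDdef] at hD3
      linarith only [hD3, h9x]
    · -- 9 ∣ D impossible
      have h9 : (9:ℤ) ∣ D := by
        rw [← hDn, hDj]
        have : (3:ℕ)^2 ∣ 3^j := Nat.pow_dvd_pow 3 hj2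
        exact_mod_cast (by exact_mod_cast this : ((3^2 : ℕ):ℤ) ∣ ((3^j : ℕ):ℤ))
      have hD36 : D = 36*x₀^2 - 3 := by rw [hDdef, hx₀]; ring
      have h9' : (9:ℤ) ∣ 36*x₀^2 := ⟨4*x₀^2, by ring⟩
      have h93 : (9:ℤ) ∣ 3 := by
        have := dvd_sub h9' (hD36 ▸ h9)
        simpa using this
      norm_num at h93
  · -- growth contradiction
    have hk3m : k*3 ≤ k*m₂ := Nat.mul_le_mul_left k hm₂3
    obtain ⟨E, hE1, hE2⟩ : ∃ E, 1 ≤ E ∧ k + 1 + E = k*m₂ :=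
      ⟨k*m₂ - k - 1, by omega, by omega⟩
    -- real chain
    have hR1 : γ^(l₂) < 2*((Zseq X₁ l₂ : ℤ):ℝ) := hZlt l₂
    have hcast : ((Zseq X₁ l₂ : ℤ):ℝ) = (2:ℝ)^b₁*(3:ℝ)^b₂ := by
      rw [hZl₂]; push_cast; ring
    have h2b : ((2:ℝ))^b₁ ≤ (X₁:ℝ) := by exact_mod_cast hb₁x
    have h3b : ((3:ℝ))^b₂ ≤ (3:ℝ)^(c+e) := pow_le_pow_right₀ (by norm_num) hb₂ce
    have h3ce : ((3:ℝ))^(c+e) ≤ ((Zseq X₁ k : ℤ):ℝ)*(m₂:ℝ) := by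
      have h1 : (3:ℤ)^(c+e) ≤ (Zseq X₁ k)*(m₂:ℤ) := by
        rw [pow_add]
        exact mul_le_mul hzc3 he3 (by positivity) (le_trans (by positivity) hzc3)
      exact_mod_cast h1
    have hzγ : ((Zseq X₁ k : ℤ):ℝ) ≤ γ^k := hZle k
    have hxγ : (X₁:ℝ) < γ := by rw [hγ]; linarith only [hsdy, hsd1]
    have hm₂R : (3:ℝ) ≤ (m₂:ℝ) := by exact_mod_cast hm₂3
    have hbig : γ^(l₂) < 2*γ^(k+1)*(m₂:ℝ) := by
      have t1 : ((Zseq X₁ l₂ : ℤ):ℝ) ≤ (X₁:ℝ)*(((Zseq X₁ k : ℤ):ℝ)*(m₂:ℝ)) := by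
        rw [hcast]
        exact mul_le_mul h2b (le_trans h3b h3ce) (by positivity) (by linarith only [hxR])
      have t2 : (X₁:ℝ)*(((Zseq X₁ k : ℤ):ℝ)*(m₂:ℝ)) ≤ γ*(γ^k*(m₂:ℝ)) := by
        have hZkpos : (0:ℝ) < ((Zseq X₁ k : ℤ):ℝ) := by exact_mod_cast hZpos k
        have hγk : (0:ℝ) < γ^k := pow_pos hγpos k
        have hm₂pos : (0:ℝ) < (m₂:ℝ) := by linarith only [hm₂R]
        have i1 : ((Zseq X₁ k : ℤ):ℝ)*(m₂:ℝ) ≤ γ^k*(m₂:ℝ) :=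
          mul_le_mul_of_nonneg_right hzγ hm₂pos.le
        have i2 : (0:ℝ) ≤ ((Zseq X₁ k : ℤ):ℝ)*(m₂:ℝ) := by positivity
        exact mul_le_mul hxγ.le i1 i2 hγpos.le
      have e3 : γ*(γ^k*(m₂:ℝ)) = γ^(k+1)*(m₂:ℝ) := by rw [pow_succ]; ring
      calc γ^(l₂) < 2*((Zseq X₁ l₂ : ℤ):ℝ) := hR1
        _ ≤ 2*((X₁:ℝ)*(((Zseq X₁ k : ℤ):ℝ)*(m₂:ℝ))) := by linarith only [t1]
        _ ≤ 2*(γ*(γ^k*(m₂:ℝ))) := by linarith only [t2]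
        _ = 2*γ^(k+1)*(m₂:ℝ) := by rw [e3]; ring
    have hsplit : γ^(l₂) = γ^(k+1)*γ^E := by
      rw [hq₂, ← hE2, pow_add]
    have hγE : γ^E < 2*(m₂:ℝ) := by
      have hpos : (0:ℝ) < γ^(k+1) := pow_pos hγpos _
      rw [hsplit] at hbig
      have h1 : γ^(k+1)*γ^E < γ^(k+1)*(2*(m₂:ℝ)) := by linarith only [hbig]
      have h2 := (mul_lt_mul_iff_right₀ hpos).mp h1
      linarith only [h2]
    have h3E : (3:ℝ)^E < 2*(m₂:ℝ) := by
      have h1 := pow_le_pow_left₀ (by norm_num : (0:ℝ) ≤ 3) hγ3.le E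
      linarith only [h1, hγE]
    have hnat : 3^E < 2*m₂ := by exact_mod_cast h3E
    have hkey := key_nat k m₂ hk1 hm₂3 hcase
    have hEeq : k*m₂ - k - 1 = E := by omega
    rw [hEeq] at hkey
    omega
end

section
/- (Baker–Davenport reduction, Dujella–Pethő.) Let τ be an irrational real number, M a positive integer, and p/q a convergent of the continued fraction of τ with q > 6M. Let A, B, μ be real numbers with A > 0 and B > 1, and set ε₁ := ‖μ·q‖ − M·‖τ·q‖, where ‖x‖ denotes the distance from x to the nearest integer. If ε₁ > 0, then there is no solution of the inequality |m·τ − n + μ| < A·B^{−k} in positive integers m, n, k with m ≤ M and k ≥ log(A·q/ε₁)/log B. -/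
/-!
If `|mτ - n + μ| < A B^{-k}`, multiplying by `q` and writing `r` for the integer nearest to `τq`
exhibits the integer `nq - mr` within `q A B^{-k} + m ‖τq‖` of `μq`, so
`‖μq‖ - M ‖τq‖ < q A B^{-k}`. The lower bound on `k` makes the right-hand side at most `ε₁`.
-/

theorem abs_sub_round_sub_mul_le (τ μ : ℝ) (m n q : ℤ) :
    |μ * q - round (μ * q)| - |(m : ℝ)| * |τ * q - round (τ * q)| ≤
      |(q : ℝ)| * |m * τ - n + μ| := by
  set r := round (τ * q)
  have hsplit : μ * q - ((n * q - m * r : ℤ) : ℝ) = q * (m * τ - n + μ) - m * (τ * q - r) := by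
    push_cast; ring
  have hround : |μ * q - round (μ * q)| ≤ |μ * q - ((n * q - m * r : ℤ) : ℝ)| := round_le _ _
  have htri := abs_sub (q * (m * τ - n + μ) : ℝ) (m * (τ * q - r))
  rw [← hsplit, abs_mul, abs_mul] at htri
  linarith

theorem le_rpow_of_log_div_log_le {C B x : ℝ} (hC : 0 < C) (hB : 1 < B)
    (h : Real.log C / Real.log B ≤ x) : C ≤ B ^ x := by
  rw [Real.le_rpow_iff_log_le hC (by linarith), ← div_le_iff₀ (Real.log_pos hB)]
  exact h

theorem stmt_6_general (τ : ℝ)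
    (M : ℕ)
    (q : ℤ)
    (hq6M : 6 * (M : ℤ) < q)
    (A B μ : ℝ) (hA : 0 < A) (hB : 1 < B)
    (ε₁ : ℝ)
    (hε₁def : ε₁ = |μ * (q : ℝ) - (round (μ * (q : ℝ)) : ℝ)| -
        (M : ℝ) * |τ * (q : ℝ) - (round (τ * (q : ℝ)) : ℝ)|)
    (hε₁ : 0 < ε₁) :
    ¬ ∃ m n k : ℕ, 0 < m ∧ 0 < n ∧ 0 < k ∧ m ≤ M ∧
        Real.log (A * (q : ℝ) / ε₁) / Real.log B ≤ (k : ℝ) ∧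
        |(m : ℝ) * τ - (n : ℝ) + μ| < A * B ^ (-(k : ℝ)) := by
  rintro ⟨m, n, k, -, -, -, hmM, hklog, hsol⟩
  have hq : (0 : ℝ) < q := by exact_mod_cast (by omega : (0 : ℤ) < q)
  have hBk : 0 < B ^ (k : ℝ) := Real.rpow_pos_of_pos (by linarith) _
  have hpow : A * q / ε₁ ≤ B ^ (k : ℝ) := le_rpow_of_log_div_log_le (by positivity) hB hklog
  have hbound : q * (A * B ^ (-(k : ℝ))) ≤ ε₁ := by
    rw [div_le_iff₀ hε₁] at hpow
    rw [Real.rpow_neg (by linarith), ← div_eq_mul_inv, mul_div_assoc', div_le_iff₀ hBk]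
    linarith
  have hkey := abs_sub_round_sub_mul_le τ μ m n q
  have hm : (m : ℝ) * |τ * q - round (τ * q)| ≤ M * |τ * q - round (τ * q)| :=
    mul_le_mul_of_nonneg_right (by exact_mod_cast hmM) (abs_nonneg _)
  push_cast [abs_of_pos hq, Nat.abs_cast] at hkey
  nlinarith [mul_lt_mul_of_pos_left hsol hq]

/-- Baker–Davenport reduction (Dujella–Pethő). Let `τ` be irrational with continued
fraction partial quotients `a t` and convergents `P t / Q t`, let `p/q` be a convergent
with `q > 6M`, let `A > 0`, `B > 1`, `μ` be reals, and set
`ε₁ := ‖μ·q‖ - M·‖τ·q‖` (distance to the nearest integer). If `ε₁ > 0`, then there is no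
solution of `|m·τ - n + μ| < A·B^(-k)` in positive integers `m, n, k` with `m ≤ M` and
`k ≥ log(A·q/ε₁)/log B`. -/
theorem stmt_6 (τ : ℝ) (hτ : Irrational τ)
    (M : ℕ) (hM : 0 < M)
    (a : ℕ → ℤ) (τs : ℕ → ℝ)
    (hτ0 : τs 0 = τ)
    (ha : ∀ t, a t = ⌊τs t⌋)
    (hτs : ∀ t, τs (t + 1) = 1 / (τs t - ⌊τs t⌋))
    (P Q : ℕ → ℤ)
    (hP0 : P 0 = a 0) (hP1 : P 1 = a 1 * a 0 + 1)
    (hPr : ∀ t, P (t + 2) = a (t + 2) * P (t + 1) + P t)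
    (hQ0 : Q 0 = 1) (hQ1 : Q 1 = a 1)
    (hQr : ∀ t, Q (t + 2) = a (t + 2) * Q (t + 1) + Q t)
    (p q : ℤ) (hconv : ∃ t, p = P t ∧ q = Q t)
    (hq6M : 6 * (M : ℤ) < q)
    (A B μ : ℝ) (hA : 0 < A) (hB : 1 < B)
    (ε₁ : ℝ)
    (hε₁def : ε₁ = |μ * (q : ℝ) - (round (μ * (q : ℝ)) : ℝ)| -
        (M : ℝ) * |τ * (q : ℝ) - (round (τ * (q : ℝ)) : ℝ)|)
    (hε₁ : 0 < ε₁) :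
    ¬ ∃ m n k : ℕ, 0 < m ∧ 0 < n ∧ 0 < k ∧ m ≤ M ∧
        Real.log (A * (q : ℝ) / ε₁) / Real.log B ≤ (k : ℝ) ∧
        |(m : ℝ) * τ - (n : ℝ) + μ| < A * B ^ (-(k : ℝ)) :=
  stmt_6_general τ M q hq6M A B μ hA hB ε₁ hε₁def hε₁
end

section
/- Let p₁ ≤ ⋯ ≤ p_s be primes and r ≥ 1. Suppose that for a non-square integer d > 1 there are indices 1 ≤ l₁ ≤ l₂ such that X_{l₁} = p₁^{a_{11}}⋯p_s^{a_{1s}} + ⋯ + p₁^{a_{r1}}⋯p_s^{a_{rs}} and X_{l₂} = p₁^{b_{11}}⋯p_s^{b_{1s}} + ⋯ + p₁^{b_{r1}}⋯p_s^{b_{rs}}, where a_{rs} is the maximum of the exponents a_{ij} and b_{rs} is the maximum of the exponents b_{ij}. Then a_{rs} ≤ s·b_{rs} + log r / log p_s. -/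
/-- If `X_l₁` and `X_l₂` (with `1 ≤ l₁ ≤ l₂`) are both sums of `r` positive `S`-units built
from primes `p₁ ≤ ⋯ ≤ p_s` with maximal exponents `a_rs` and `b_rs` respectively, then
`a_rs ≤ s·b_rs + log r / log p_s`. -/
theorem stmt_8
    (d : ℤ) (hd : 1 < d) (hd' : ¬ IsSquare d)
    (X₁ Y₁ : ℤ) (hX₁ : 0 < X₁) (hY₁ : 0 < Y₁)
    (hPell : X₁ ^ 2 - d * Y₁ ^ 2 = 1)
    (hfund : ∀ x y : ℤ, 0 < x → 0 < y → x ^ 2 - d * y ^ 2 = 1 → X₁ ≤ x)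
    (γ : ℝ) (hγ : γ = (X₁ : ℝ) + (Y₁ : ℝ) * Real.sqrt (d : ℝ))
    (X : ℕ → ℤ) (hX : ∀ l : ℕ, 1 ≤ l → (X l : ℝ) = (γ ^ l + γ⁻¹ ^ l) / 2)
    (s r : ℕ) (hs : 0 < s) (hr : 0 < r)
    (p : Fin s → ℕ) (hp : ∀ j, (p j).Prime) (hmono : Monotone p)
    (l₁ l₂ : ℕ) (hl₁ : 1 ≤ l₁) (hl₁l₂ : l₁ ≤ l₂)
    (a b : Fin r → Fin s → ℕ)
    (hsum₁ : X l₁ = ∑ i, ∏ j, (p j : ℤ) ^ a i j)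
    (hsum₂ : X l₂ = ∑ i, ∏ j, (p j : ℤ) ^ b i j)
    (hamax : ∀ i j, a i j ≤ a ⟨r - 1, by omega⟩ ⟨s - 1, by omega⟩)
    (hbmax : ∀ i j, b i j ≤ b ⟨r - 1, by omega⟩ ⟨s - 1, by omega⟩) :
    ((a ⟨r - 1, by omega⟩ ⟨s - 1, by omega⟩ : ℕ) : ℝ) ≤
      (s : ℝ) * (b ⟨r - 1, by omega⟩ ⟨s - 1, by omega⟩ : ℕ) +
        Real.log r / Real.log (p ⟨s - 1, by omega⟩) := by
  set js : Fin s := ⟨s - 1, by omega⟩ with hjs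
  set ir : Fin r := ⟨r - 1, by omega⟩ with hir
  set A : ℕ := a ir js with hA
  set B : ℕ := b ir js with hB
  have hps : 2 ≤ p js := (hp js).two_le
  -- γ > 1
  have hsd : (1 : ℝ) < Real.sqrt d := by
    rw [show (1 : ℝ) = Real.sqrt 1 by simp]
    exact Real.sqrt_lt_sqrt (by norm_num) (by exact_mod_cast hd)
  have hX₁' : (1 : ℝ) ≤ (X₁ : ℝ) := by exact_mod_cast hX₁
  have hY₁' : (1 : ℝ) ≤ (Y₁ : ℝ) := by exact_mod_cast hY₁
  have hγ1 : (1 : ℝ) < γ := by rw [hγ]; nlinarith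
  have hγ0 : (0 : ℝ) < γ := by linarith
  -- X l₁ ≤ X l₂
  have hXle : X l₁ ≤ X l₂ := by
    have h1 := hX l₁ hl₁
    have h2 := hX l₂ (le_trans hl₁ hl₁l₂)
    have hu0 : (0 : ℝ) < γ ^ l₁ := pow_pos hγ0 _
    have hv0 : (0 : ℝ) < γ ^ l₂ := pow_pos hγ0 _
    have huv : γ ^ l₁ ≤ γ ^ l₂ := pow_le_pow_right₀ hγ1.le hl₁l₂
    have hu1 : (1 : ℝ) ≤ γ ^ l₁ := by
      have := pow_le_pow_right₀ hγ1.le (Nat.zero_le l₁); simpa using this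
    have hinv : (γ ^ l₁)⁻¹ - (γ ^ l₂)⁻¹ = (γ ^ l₂ - γ ^ l₁) * ((γ ^ l₁)⁻¹ * (γ ^ l₂)⁻¹) := by
      field_simp
    have hle1 : (γ ^ l₁)⁻¹ * (γ ^ l₂)⁻¹ ≤ 1 := by
      rw [← mul_inv]
      exact inv_le_one_of_one_le₀ (by nlinarith)
    have hstep : (γ ^ l₁)⁻¹ - (γ ^ l₂)⁻¹ ≤ γ ^ l₂ - γ ^ l₁ := by
      rw [hinv]
      nlinarith [sub_nonneg.2 huv, mul_pos (inv_pos.2 hu0) (inv_pos.2 hv0)]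
    have hmono2 : γ ^ l₁ + γ⁻¹ ^ l₁ ≤ γ ^ l₂ + γ⁻¹ ^ l₂ := by
      rw [inv_pow, inv_pow]; linarith
    have : ((X l₁ : ℤ) : ℝ) ≤ ((X l₂ : ℤ) : ℝ) := by
      rw [h1, h2]; linarith
    exact_mod_cast this
  -- lower bound: p js ^ A ≤ X l₁ (in ℕ world)
  have hlowN : (p js) ^ A ≤ ∑ i, ∏ j, p j ^ a i j := by
    have h1 : (p js) ^ A ≤ ∏ j, p j ^ a ir j := by
      refine Finset.single_le_prod' (f := fun j => p j ^ a ir j)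
        (fun j _ => Nat.one_le_pow _ _ (hp j).pos)
        (Finset.mem_univ js)
    exact le_trans h1 (Finset.single_le_sum (f := fun i => ∏ j, p j ^ a i j)
      (fun i _ => Nat.zero_le _) (Finset.mem_univ ir))
  -- upper bound: ∑ ≤ r * p js ^ (s * B)
  have hupN : (∑ i, ∏ j, p j ^ b i j) ≤ r * (p js) ^ (s * B) := by
    have hterm : ∀ i : Fin r, (∏ j, p j ^ b i j) ≤ (p js) ^ (s * B) := by
      intro i
      calc (∏ j, p j ^ b i j) ≤ ∏ _j : Fin s, (p js) ^ B := by
            refine Finset.prod_le_prod' fun j _ => ?_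
            calc p j ^ b i j ≤ p js ^ b i j :=
                  Nat.pow_le_pow_left (hmono (by rw [Fin.le_def]; simp [hjs]; omega)) _
              _ ≤ p js ^ B := Nat.pow_le_pow_right (hp js).pos (hbmax i j)
        _ = (p js) ^ (s * B) := by
            rw [Finset.prod_const, Finset.card_univ, Fintype.card_fin, ← pow_mul, Nat.mul_comm]
    calc (∑ i, ∏ j, p j ^ b i j) ≤ ∑ _i : Fin r, (p js) ^ (s * B) :=
          Finset.sum_le_sum fun i _ => hterm i
      _ = r * (p js) ^ (s * B) := by
          rw [Finset.sum_const, Finset.card_univ, Fintype.card_fin, smul_eq_mul]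
  -- combine over ℤ
  have hkey : (p js) ^ A ≤ r * (p js) ^ (s * B) := by
    have : ((p js : ℤ)) ^ A ≤ (r : ℤ) * (p js : ℤ) ^ (s * B) := by
      calc ((p js : ℤ)) ^ A ≤ X l₁ := by rw [hsum₁]; exact_mod_cast hlowN
        _ ≤ X l₂ := hXle
        _ ≤ (r : ℤ) * (p js : ℤ) ^ (s * B) := by rw [hsum₂]; exact_mod_cast hupN
    exact_mod_cast this
  -- to the reals
  have hp0 : (0 : ℝ) < (p js : ℝ) := by positivity
  have hlogp : (0 : ℝ) < Real.log (p js) :=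
    Real.log_pos (by exact_mod_cast Nat.lt_of_lt_of_le one_lt_two hps)
  have hkeyR : ((p js : ℝ)) ^ A ≤ (r : ℝ) * (p js : ℝ) ^ (s * B) := by exact_mod_cast hkey
  have hlog : (A : ℝ) * Real.log (p js) ≤ Real.log r + (s * B : ℕ) * Real.log (p js) := by
    have h1 : Real.log ((p js : ℝ) ^ A) ≤ Real.log ((r : ℝ) * (p js : ℝ) ^ (s * B)) :=
      Real.log_le_log (by positivity) hkeyR
    rwa [Real.log_pow, Real.log_mul (by positivity) (by positivity), Real.log_pow] at h1
  have h2 : (A : ℝ) - (s : ℝ) * (B : ℝ) ≤ Real.log r / Real.log (p js) := by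
    rw [le_div_iff₀ hlogp]
    push_cast at hlog ⊢
    nlinarith [hlog]
  linarith
end

section
/- Let p₁ ≤ ⋯ ≤ p_s be primes and r ≥ 1. Suppose that for a non-square integer d > 1 and an integer l ≥ 1 one has X_l = p₁^{n_{11}}⋯p_s^{n_{1s}} + ⋯ + p₁^{n_{r1}}⋯p_s^{n_{rs}} with non-negative integer exponents n_{ij}, where n_{rs} = max_{i,j} n_{ij}. Then n_{rs}·log p_s < l·log γ < s·n_{rs}·log p_s + log(2.5·r). -/
/-- If `X_l` is a sum of `r` positive `S`-units built from primes `p₁ ≤ ⋯ ≤ p_s` with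
maximal exponent `n_rs`, then `n_rs·log p_s < l·log γ < s·n_rs·log p_s + log(2.5·r)`. -/
theorem stmt_9
    (d : ℤ) (hd : 1 < d) (hd' : ¬ IsSquare d)
    (X₁ Y₁ : ℤ) (hX₁ : 0 < X₁) (hY₁ : 0 < Y₁)
    (hPell : X₁ ^ 2 - d * Y₁ ^ 2 = 1)
    (hfund : ∀ x y : ℤ, 0 < x → 0 < y → x ^ 2 - d * y ^ 2 = 1 → X₁ ≤ x)
    (γ : ℝ) (hγ : γ = (X₁ : ℝ) + (Y₁ : ℝ) * Real.sqrt (d : ℝ))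
    (X : ℕ → ℤ) (hX : ∀ l : ℕ, 1 ≤ l → (X l : ℝ) = (γ ^ l + γ⁻¹ ^ l) / 2)
    (s r : ℕ) (hs : 0 < s) (hr : 0 < r)
    (p : Fin s → ℕ) (hp : ∀ j, (p j).Prime) (hmono : Monotone p)
    (n : Fin r → Fin s → ℕ)
    (l : ℕ) (hl : 1 ≤ l)
    (hsum : X l = ∑ i, ∏ j, (p j : ℤ) ^ n i j)
    (hmax : ∀ i j, n i j ≤ n ⟨r - 1, by omega⟩ ⟨s - 1, by omega⟩) :
    ((n ⟨r - 1, by omega⟩ ⟨s - 1, by omega⟩ : ℕ) : ℝ) * Real.log (p ⟨s - 1, by omega⟩) <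
      (l : ℝ) * Real.log γ ∧
    (l : ℝ) * Real.log γ <
      (s : ℝ) * (n ⟨r - 1, by omega⟩ ⟨s - 1, by omega⟩ : ℕ) * Real.log (p ⟨s - 1, by omega⟩) +
        Real.log (2.5 * r) := by
  have hdR : (1:ℝ) < (d:ℝ) := by exact_mod_cast hd
  have hsq : 0 < Real.sqrt d := Real.sqrt_pos.2 (by linarith)
  have hX1R : (1:ℝ) ≤ (X₁:ℝ) := by exact_mod_cast hX₁
  have hY1R : (0:ℝ) < (Y₁:ℝ) := by exact_mod_cast hY₁
  have hγ1 : 1 < γ := by rw [hγ]; nlinarith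
  have hγ0 : 0 < γ := by linarith
  have hγl1 : 1 < γ ^ l := one_lt_pow₀ hγ1 (by omega)
  have hXl := hX l hl
  rw [inv_pow] at hXl
  have hinv : (γ ^ l)⁻¹ < 1 := inv_lt_one_of_one_lt₀ hγl1
  have hinv0 : 0 < (γ ^ l)⁻¹ := by positivity
  have hXlt : (X l : ℝ) < γ ^ l := by rw [hXl]; linarith
  have hXgt : γ ^ l / 2 < (X l : ℝ) := by rw [hXl]; linarith
  set i0 : Fin r := ⟨r - 1, by omega⟩ with hi0
  set j0 : Fin s := ⟨s - 1, by omega⟩ with hj0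
  have hP1 : (1:ℤ) < (p j0 : ℤ) := by exact_mod_cast (hp j0).one_lt
  have hlow : (p j0 : ℤ) ^ (n i0 j0) ≤ X l := by
    rw [hsum]
    calc (p j0:ℤ) ^ n i0 j0 ≤ ∏ j, (p j:ℤ) ^ n i0 j := by
          have hnat : (p j0) ^ n i0 j0 ≤ ∏ j, (p j) ^ n i0 j :=
            Finset.single_le_prod' (f := fun j => (p j) ^ n i0 j)
              (fun j _ => Nat.one_le_iff_ne_zero.2 (pow_ne_zero _ (hp j).pos.ne')) (Finset.mem_univ j0)
          exact_mod_cast hnat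
      _ ≤ ∑ i, ∏ j, (p j:ℤ) ^ n i j := by
          refine Finset.single_le_sum (f := fun i => ∏ j, (p j:ℤ) ^ n i j)
            (fun i _ => ?_) (Finset.mem_univ i0)
          positivity
  have hterm : ∀ i : Fin r, ∏ j, (p j:ℤ) ^ n i j ≤ (p j0:ℤ) ^ (s * n i0 j0) := by
    intro i
    have h1 : ∏ j : Fin s, (p j:ℤ) ^ n i j ≤ ∏ _j : Fin s, (p j0:ℤ) ^ n i0 j0 := by
      apply Finset.prod_le_prod (fun j _ => by positivity) (fun j _ => ?_)
      have hpj : (p j : ℤ) ≤ (p j0 : ℤ) := by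
        exact_mod_cast hmono (show j ≤ j0 by
          rw [Fin.le_def]; have := j.2; simp [hj0]; omega)
      calc (p j:ℤ) ^ n i j ≤ (p j0:ℤ) ^ n i j :=
            pow_le_pow_left₀ (by positivity) hpj _
        _ ≤ (p j0:ℤ) ^ n i0 j0 := pow_le_pow_right₀ (by linarith) (hmax i j)
    calc ∏ j : Fin s, (p j:ℤ) ^ n i j ≤ _ := h1
      _ = (p j0:ℤ) ^ (s * n i0 j0) := by
          rw [Finset.prod_const, ← pow_mul, Finset.card_univ, Fintype.card_fin, mul_comm]
  have hup : X l ≤ (r:ℤ) * (p j0:ℤ) ^ (s * n i0 j0) := by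
    rw [hsum]
    calc ∑ i, ∏ j, (p j:ℤ) ^ n i j ≤ Finset.univ.card • ((p j0:ℤ) ^ (s * n i0 j0)) :=
          Finset.sum_le_card_nsmul _ _ _ (fun i _ => hterm i)
      _ = (r:ℤ) * (p j0:ℤ) ^ (s * n i0 j0) := by
          rw [Finset.card_univ, Fintype.card_fin, nsmul_eq_mul]
  have hP1R : (1:ℝ) < (p j0 : ℝ) := by exact_mod_cast (hp j0).one_lt
  have hXR0 : (0:ℝ) < (X l : ℝ) := by
    have : ((p j0:ℤ)^(n i0 j0) : ℝ) ≤ (X l : ℝ) := by exact_mod_cast hlow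
    push_cast at this
    nlinarith [pow_pos (lt_trans one_pos hP1R) (n i0 j0)]
  constructor
  · have h1 : ((p j0:ℝ) ^ n i0 j0) ≤ (X l : ℝ) := by exact_mod_cast hlow
    have h2 : Real.log ((p j0:ℝ) ^ n i0 j0) ≤ Real.log (X l) :=
      Real.log_le_log (by positivity) h1
    have h3 : Real.log (X l) < Real.log (γ ^ l) := Real.log_lt_log hXR0 hXlt
    rw [Real.log_pow] at h2
    rw [Real.log_pow] at h3
    calc ((n i0 j0 : ℕ) : ℝ) * Real.log (p j0) ≤ Real.log (X l) := h2
      _ < (l:ℝ) * Real.log γ := h3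
  · have hupR : (X l : ℝ) ≤ (r:ℝ) * (p j0:ℝ) ^ (s * n i0 j0) := by exact_mod_cast hup
    have hB : (0:ℝ) < (p j0:ℝ) ^ (s * n i0 j0) := by positivity
    have hrR : (1:ℝ) ≤ (r:ℝ) := by exact_mod_cast hr
    have h4 : γ ^ l < 2.5 * r * (p j0:ℝ) ^ (s * n i0 j0) := by nlinarith
    have h5 : Real.log (γ ^ l) <
        Real.log ((2.5 * r) * (p j0:ℝ) ^ (s * n i0 j0)) := by
      apply Real.log_lt_log (by positivity)
      linarith [h4]
    rw [Real.log_pow, Real.log_mul (by positivity : (0:ℝ) < 2.5 * r).ne'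
      (by positivity : (0:ℝ) < (p j0:ℝ) ^ (s * n i0 j0)).ne', Real.log_pow] at h5
    push_cast at h5 ⊢
    linarith
end

section
/- Suppose that for a non-square integer d > 1, an integer l ≥ 1, and non-negative integers n₁ ≤ n₂ one has X_l = 2^{n₁}·3^{n₂}, and that min{γ, n₂} ≥ 7.5. Then l < 2·n₂. -/
/-- If `X_l = 2^n₁·3^n₂` with `n₁ ≤ n₂` and `min {γ, n₂} ≥ 7.5`, then `l < 2·n₂`. -/
theorem stmt_15
    (d : ℤ) (hd : 1 < d) (hd' : ¬ IsSquare d)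
    (X₁ Y₁ : ℤ) (hX₁ : 0 < X₁) (hY₁ : 0 < Y₁)
    (hPell : X₁ ^ 2 - d * Y₁ ^ 2 = 1)
    (hfund : ∀ x y : ℤ, 0 < x → 0 < y → x ^ 2 - d * y ^ 2 = 1 → X₁ ≤ x)
    (γ : ℝ) (hγ : γ = (X₁ : ℝ) + (Y₁ : ℝ) * Real.sqrt (d : ℝ))
    (X : ℕ → ℤ) (hX : ∀ l : ℕ, 1 ≤ l → (X l : ℝ) = (γ ^ l + γ⁻¹ ^ l) / 2)
    (l : ℕ) (hl : 1 ≤ l)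
    (n₁ n₂ : ℕ) (hn : n₁ ≤ n₂)
    (hXl : X l = 2 ^ n₁ * 3 ^ n₂)
    (hmin : min γ ((n₂ : ℕ) : ℝ) ≥ 7.5) :
    l < 2 * n₂ := by
  have hγ75 : (7.5 : ℝ) ≤ γ := le_trans (le_min_iff.mp hmin).1 le_rfl
  have hn75 : (7.5 : ℝ) ≤ (n₂ : ℝ) := (le_min_iff.mp hmin).2
  have hn1 : 1 ≤ n₂ := by exact_mod_cast le_trans (by norm_num : (1:ℝ) ≤ 7.5) hn75
  have hγ0 : (0 : ℝ) < γ := by linarith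
  have hXr : (X l : ℝ) = (γ ^ l + γ⁻¹ ^ l) / 2 := hX l hl
  have hinv : (0 : ℝ) ≤ γ⁻¹ ^ l := pow_nonneg (by positivity) l
  have hb1 : γ ^ l / 2 ≤ (X l : ℝ) := by rw [hXr]; linarith
  have hXcast : (X l : ℝ) = (2 : ℝ) ^ n₁ * 3 ^ n₂ := by rw [hXl]; push_cast; ring
  have hb2 : (X l : ℝ) ≤ 6 ^ n₂ := by
    rw [hXcast]
    calc (2 : ℝ) ^ n₁ * 3 ^ n₂ ≤ (2 : ℝ) ^ n₂ * 3 ^ n₂ := by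
          exact mul_le_mul_of_nonneg_right
            (pow_le_pow_right₀ (by norm_num) hn) (by positivity)
      _ = 6 ^ n₂ := by rw [← mul_pow]; norm_num
  have hγl : γ ^ l ≤ 2 * 6 ^ n₂ := by linarith
  have h75l : (7.5 : ℝ) ^ l ≤ γ ^ l := pow_le_pow_left₀ (by norm_num) hγ75 l
  by_contra hcon
  push_neg at hcon
  have h2 : (7.5 : ℝ) ^ (2 * n₂) ≤ (7.5 : ℝ) ^ l :=
    pow_le_pow_right₀ (by norm_num) hcon
  have hsq : (7.5 : ℝ) ^ (2 * n₂) = (56.25 : ℝ) ^ n₂ := by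
    rw [pow_mul]; norm_num
  have hfac : (56.25 : ℝ) ^ n₂ = (9.375 : ℝ) ^ n₂ * 6 ^ n₂ := by
    rw [← mul_pow]; norm_num
  have h9 : (9.375 : ℝ) ≤ (9.375 : ℝ) ^ n₂ := by
    calc (9.375 : ℝ) = 9.375 ^ 1 := (pow_one _).symm
      _ ≤ 9.375 ^ n₂ := pow_le_pow_right₀ (by norm_num) hn1
  have h6pos : (0 : ℝ) < 6 ^ n₂ := by positivity
  nlinarith [h2, hsq, hfac, h9, h6pos, hγl, h75l]
end

section
/- For every non-square integer d with 1 < d ≤ 401, there is no index l with 2 ≤ l ≤ 150 and no non-negative integers a₁ ≤ a₂ ≤ 253 such that X_l = 2^{a₁}·3^{a₂}. -/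
/-- Pair `(A k, A (k+1))` of the auxiliary Chebyshev-like sequence
`A 0 = 1`, `A 1 = 4t-3`, `A (k+2) = (4t-2) * A (k+1) - A k`;
for `t = x^2` one has `T_{2k+1}(x) = x * A k`. -/
def Apair {R : Type*} [CommRing R] (t : R) : ℕ → R × R
  | 0 => (1, 4*t-3)
  | k+1 => ((Apair t k).2, (4*t-2)*(Apair t k).2 - (Apair t k).1)

def Aseq {R : Type*} [CommRing R] (t : R) (k : ℕ) : R := (Apair t k).1

lemma Aseq_zero {R : Type*} [CommRing R] (t : R) : Aseq t 0 = 1 := rfl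

lemma Aseq_one {R : Type*} [CommRing R] (t : R) : Aseq t 1 = 4*t-3 := rfl

lemma Aseq_rec {R : Type*} [CommRing R] (t : R) (k : ℕ) :
    Aseq t (k+2) = (4*t-2) * Aseq t (k+1) - Aseq t k := rfl

lemma Apair_cast {R : Type*} [CommRing R] (t : ℤ) (k : ℕ) :
    (((Apair t k).1 : ℤ) : R) = (Apair (t : R) k).1 ∧
      (((Apair t k).2 : ℤ) : R) = (Apair (t : R) k).2 := by
  induction k with
  | zero => constructor <;> simp only [Apair] <;> push_cast <;> ring
  | succ k ih =>
    constructor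
    · simpa [Apair] using ih.2
    · simp only [Apair]
      push_cast [ih.1, ih.2]
      ring

lemma Aseq_cast {R : Type*} [CommRing R] (t : ℤ) (k : ℕ) :
    ((Aseq t k : ℤ) : R) = Aseq (t : R) k := (Apair_cast t k).1

lemma Aseq_odd (t : ℤ) (k : ℕ) : Odd (Aseq t k) := by
  suffices h : Odd (Apair t k).1 ∧ Odd (Apair t k).2 from h.1
  induction k with
  | zero =>
    constructor
    · simp only [Apair]; exact odd_one
    · simp only [Apair]; exact ⟨2*t-2, by ring⟩
  | succ k ih =>
    refine ⟨ih.2, ?_⟩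
    have he : Even ((4*t-2)*(Apair t k).2) := ⟨(2*t-1)*(Apair t k).2, by ring⟩
    exact he.sub_odd ih.1

lemma Aseq_ge (t : ℤ) (ht : 4 ≤ t) (k : ℕ) (hk : 1 ≤ k) : 13 ≤ Aseq t k := by
  have h : ∀ j : ℕ, 1 ≤ (Apair t j).1 ∧ 13 ≤ (Apair t j).2 ∧ (Apair t j).1 ≤ (Apair t j).2 := by
    intro j
    induction j with
    | zero =>
      simp only [Apair]
      refine ⟨by norm_num, by nlinarith, by nlinarith⟩
    | succ j ih =>
      obtain ⟨h1, h2, h3⟩ := ih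
      refine ⟨by simpa [Apair] using h2.trans' (by norm_num), ?_, ?_⟩
      · simp only [Apair]; nlinarith
      · simp only [Apair]; nlinarith
  obtain ⟨k, rfl⟩ : ∃ j, k = j + 1 := ⟨k - 1, by omega⟩
  have hh : Aseq t (k+1) = (Apair t k).2 := rfl
  rw [hh]
  exact (h k).2.1

lemma mod9_claim : ∀ c : ZMod 9, ∀ k ∈ Finset.Icc 1 74, k % 3 ≠ 1 → Aseq (c^2) k ≠ 0 := by
  decide

lemma even_mod9 : ∀ z : ZMod 9, 2*z*z - 1 ≠ 0 := by decide

lemma odd_dvd_pow23 (w : ℤ) (hw : Odd w) (hwpos : 0 < w) (a b : ℕ)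
    (hdvd : w ∣ 2^a * 3^b) : ∃ e : ℕ, w = 3^e := by
  lift w to ℕ using hwpos.le with n
  have hdvd' : n ∣ 2^a * 3^b := by
    have : (n : ℤ) ∣ ((2^a * 3^b : ℕ) : ℤ) := by push_cast; exact hdvd
    exact_mod_cast this
  have hodd : Odd n := by exact_mod_cast hw
  have hcop : Nat.Coprime n 2 := Nat.coprime_two_right.mpr hodd
  have h3 : n ∣ 3^b := (hcop.pow_right a).dvd_of_dvd_mul_left (by rwa [mul_comm] at hdvd' ⊢)
  obtain ⟨e, _, rfl⟩ := (Nat.dvd_prime_pow Nat.prime_three).mp h3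
  exact ⟨e, by push_cast; ring⟩

/-- For every non-square integer `d` with `1 < d ≤ 401`, there is no index `2 ≤ l ≤ 150`
and non-negative integers `a₁ ≤ a₂ ≤ 253` such that `X_l = 2^a₁·3^a₂`. -/
theorem stmt_18
    (d : ℤ) (hd : 1 < d) (hd' : ¬ IsSquare d)
    (X₁ Y₁ : ℤ) (hX₁ : 0 < X₁) (hY₁ : 0 < Y₁)
    (hPell : X₁ ^ 2 - d * Y₁ ^ 2 = 1)
    (hfund : ∀ x y : ℤ, 0 < x → 0 < y → x ^ 2 - d * y ^ 2 = 1 → X₁ ≤ x)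
    (γ : ℝ) (hγ : γ = (X₁ : ℝ) + (Y₁ : ℝ) * Real.sqrt (d : ℝ))
    (X : ℕ → ℤ) (hX : ∀ l : ℕ, 1 ≤ l → (X l : ℝ) = (γ ^ l + γ⁻¹ ^ l) / 2)
    (hd401 : d ≤ 401) :
    ¬ ∃ (l a₁ a₂ : ℕ),
        2 ≤ l ∧ l ≤ 150 ∧ a₁ ≤ a₂ ∧ a₂ ≤ 253 ∧
        X l = 2 ^ a₁ * 3 ^ a₂ := by
  rintro ⟨l, a, b, hl2, hl150, -, -, hEq⟩
  -- basic real facts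
  have hdR : (0:ℝ) ≤ (d:ℝ) := by exact_mod_cast hd.le.trans' (by norm_num)
  set s : ℝ := Real.sqrt (d:ℝ) with hsdef
  have hs : s^2 = (d:ℝ) := Real.sq_sqrt hdR
  have hPR : (X₁:ℝ)^2 - (d:ℝ)*(Y₁:ℝ)^2 = 1 := by exact_mod_cast hPell
  have hX₁R : (1:ℝ) ≤ (X₁:ℝ) := by exact_mod_cast hX₁
  have hY₁R : (1:ℝ) ≤ (Y₁:ℝ) := by exact_mod_cast hY₁
  have hsnn : (0:ℝ) ≤ s := Real.sqrt_nonneg _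
  have hγ1 : (1:ℝ) ≤ γ := by rw [hγ]; nlinarith
  have hγ0 : γ ≠ 0 := by intro h; rw [h] at hγ1; linarith
  have hinv : γ⁻¹ = (X₁:ℝ) - (Y₁:ℝ)*s := by
    refine inv_eq_of_mul_eq_one_right ?_
    rw [hγ]
    linear_combination hPR - (Y₁:ℝ)^2 * hs
  have hX1 : X 1 = X₁ := by
    have h := hX 1 le_rfl
    rw [pow_one, pow_one, hinv, hγ] at h
    have : (X 1 : ℝ) = (X₁ : ℝ) := by rw [h]; ring
    exact_mod_cast this
  have hX₁2 : 2 ≤ X₁ := by nlinarith [sq_nonneg Y₁]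
  -- the doubling identity
  have hrec0 : ∀ m : ℕ, 1 ≤ m → X (2*m) = 2 * X m * X m - 1 := by
    intro m hm
    have h1 := hX m hm
    have h2 := hX (2*m) (by omega)
    have huv : γ^m * γ⁻¹^m = 1 := by
      rw [← mul_pow, mul_inv_cancel₀ hγ0, one_pow]
    have hR : (X (2*m) : ℝ) = 2 * (X m : ℝ) * (X m : ℝ) - 1 := by
      rw [h2, h1, show 2*m = m + m by ring, pow_add, pow_add]
      linear_combination -huv
    exact_mod_cast hR
  -- the general three-term recurrence along multiples of m
  have hrec : ∀ m : ℕ, 1 ≤ m → ∀ j : ℕ, 1 ≤ j →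
      X ((j+2)*m) = 2 * X m * X ((j+1)*m) - X (j*m) := by
    intro m hm j hj
    have h1 := hX m hm
    have hj0 := hX (j*m) (Nat.mul_pos hj hm)
    have hj1 := hX ((j+1)*m) (Nat.mul_pos (by omega) hm)
    have hj2 := hX ((j+2)*m) (Nat.mul_pos (by omega) hm)
    have huv : γ^m * γ⁻¹^m = 1 := by
      rw [← mul_pow, mul_inv_cancel₀ hγ0, one_pow]
    have hR : (X ((j+2)*m) : ℝ) = 2 * (X m : ℝ) * (X ((j+1)*m) : ℝ) - (X (j*m) : ℝ) := by
      have e : ∀ i : ℕ, γ ^ (i*m) = (γ^m)^i ∧ γ⁻¹ ^ (i*m) = (γ⁻¹^m)^i := by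
        intro i
        constructor <;> rw [mul_comm, pow_mul]
      rw [hj2, hj1, hj0, h1, (e (j+2)).1, (e (j+2)).2, (e (j+1)).1, (e (j+1)).2,
        (e j).1, (e j).2]
      linear_combination (-((γ^m)^j + (γ⁻¹^m)^j)/2) * huv
    exact_mod_cast hR
  have hrec1 : ∀ j : ℕ, 1 ≤ j → X (j+2) = 2 * X₁ * X (j+1) - X j := by
    intro j hj
    have h := hrec 1 le_rfl j hj
    simpa [hX1, mul_one] using h
  have hX2 : X 2 = 2 * X₁ * X₁ - 1 := by
    have h := hrec0 1 le_rfl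
    simpa [hX1] using h
  -- X is at least 2 and monotone from index 1 on
  have hge : ∀ i : ℕ, 1 ≤ i → 2 ≤ X i := by
    have key : ∀ j : ℕ, 2 ≤ X (j+1) ∧ X (j+1) ≤ X (j+2) := by
      intro j
      induction j with
      | zero => exact ⟨by rw [hX1]; exact hX₁2, by rw [hX1, hX2]; nlinarith⟩
      | succ j ih =>
        obtain ⟨h1, h2⟩ := ih
        have h3 := hrec1 (j+1) (by omega)
        constructor
        · linarith
        · rw [show j+1+2 = j+3 by ring] at h3 ⊢
          nlinarith
    intro i hi
    obtain ⟨j, rfl⟩ : ∃ j, i = j + 1 := ⟨i - 1, by omega⟩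
    exact (key j).1
  -- case split on l
  rcases Nat.eq_zero_or_pos (l % 2) |>.symm.imp id id with h2 | h2
  rotate_left
  · -- l even : X l = 2 x^2 - 1 with x = X (l/2) ≥ 2
    obtain ⟨m, rfl⟩ : ∃ m, l = 2*m := ⟨l/2, by omega⟩
    have hm1 : 1 ≤ m := by omega
    set x := X m with hxdef
    have hx2 : 2 ≤ x := hge m hm1
    rw [hrec0 m hm1] at hEq
    rcases Nat.eq_zero_or_pos a with ha | ha
    · rw [ha, pow_zero, one_mul] at hEq
      rcases le_or_gt b 1 with hb | hb
      · interval_cases b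
        · rw [pow_zero] at hEq; nlinarith
        · rw [pow_one] at hEq; nlinarith
      · -- b ≥ 2 : contradiction mod 9
        have h9 : (9:ℤ) ∣ 3^b := by
          have := pow_dvd_pow (3:ℤ) hb
          norm_num at this
          exact this
        have hcast := congrArg (fun z : ℤ => (z : ZMod 9)) hEq
        have h3b : ((3^b : ℤ) : ZMod 9) = 0 := (ZMod.intCast_zmod_eq_zero_iff_dvd _ 9).mpr h9
        rw [h3b] at hcast
        push_cast at hcast
        exact even_mod9 (x : ZMod 9) hcast
    · -- a ≥ 1 : parity contradiction
      obtain ⟨a', rfl⟩ : ∃ a', a = a' + 1 := ⟨a - 1, by omega⟩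
      have hOdd : Odd (2*x*x - 1) := ⟨x*x - 1, by ring⟩
      have hEven : Even ((2:ℤ)^(a'+1) * 3^b) := ⟨2^a' * 3^b, by ring⟩
      rw [hEq] at hOdd
      exact (Int.not_odd_iff_even.mpr hEven) hOdd
  rcases Nat.eq_zero_or_pos (l % 3) |>.symm.imp id id with h3 | h3
  rotate_left
  · -- 3 ∣ l : X l = x * (4x^2 - 3) with x = X (l/3) ≥ 2
    obtain ⟨m, rfl⟩ : ∃ m, l = 3*m := ⟨l/3, by omega⟩
    have hm1 : 1 ≤ m := by omega
    set x := X m with hxdef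
    have hx2 : 2 ≤ x := hge m hm1
    have hX3m : X (3*m) = x * (4*x*x - 3) := by
      have h := hrec m hm1 1 le_rfl
      rw [hrec0 m hm1, one_mul] at h
      rw [show (1+2)*m = 3*m by ring] at h
      rw [h]; ring
    rw [hX3m] at hEq
    set w : ℤ := 4*x*x - 3 with hwdef
    have hw13 : 13 ≤ w := by nlinarith
    have hwodd : Odd w := ⟨2*x*x - 2, by ring⟩
    have hwdvd : w ∣ 2^a * 3^b := hEq ▸ ⟨x, by ring⟩
    obtain ⟨e, he⟩ := odd_dvd_pow23 w hwodd (by linarith) a b hwdvd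
    rcases Nat.eq_zero_or_pos e with he0 | he1
    · rw [he0, pow_zero] at he; omega
    · have h3w : (3:ℤ) ∣ w := he ▸ dvd_pow_self 3 (by omega)
      have h3x : (3:ℤ) ∣ x := by
        have h4 : (3:ℤ) ∣ 4*(x*x) := by
          have h5 : (3:ℤ) ∣ w + 3 := Dvd.dvd.add h3w ⟨1, rfl⟩
          rw [hwdef] at h5
          convert h5 using 1; ring
        have h34 : ¬ (3:ℤ) ∣ 4 := by decide
        have hxx : (3:ℤ) ∣ x*x := (Int.prime_three.dvd_mul.mp h4).resolve_left h34
        exact (Int.prime_three.dvd_mul.mp hxx).elim id id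
      obtain ⟨y, hy⟩ := h3x
      rcases Nat.lt_or_ge e 2 with he2 | he2
      · have : e = 1 := by omega
        rw [this, pow_one] at he; omega
      · have h9w : (9:ℤ) ∣ w := by
          rw [he]
          have := pow_dvd_pow (3:ℤ) he2
          norm_num at this
          exact this
        have h9y : (9:ℤ) ∣ 36*(y*y) := ⟨4*(y*y), by ring⟩
        have hw9 : w = 36*(y*y) - 3 := by rw [hwdef, hy]; ring
        have h93 : (9:ℤ) ∣ 3 := by
          have h := dvd_sub h9y (hw9 ▸ h9w)
          rwa [show 36*(y*y) - (36*(y*y)-3) = 3 by ring] at h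
        norm_num at h93
  · -- l odd, not divisible by 3 : X l = X₁ * Aseq (X₁^2) k with l = 2k+1
    obtain ⟨k, rfl⟩ : ∃ k, l = 2*k+1 := ⟨l/2, by omega⟩
    have hk1 : 1 ≤ k := by omega
    have hk74 : k ≤ 74 := by omega
    have hk3 : k % 3 ≠ 1 := by omega
    set t : ℤ := X₁^2 with htdef
    have hA : ∀ k : ℕ, X (2*k+1) = X₁ * Aseq t k ∧ X (2*k+3) = X₁ * Aseq t (k+1) := by
      intro k
      induction k with
      | zero =>
        constructor
        · norm_num [Aseq_zero, hX1]
        · have h := hrec1 1 le_rfl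
          norm_num at h ⊢
          rw [h, hX2, hX1, Aseq_one, htdef]
          ring
      | succ k ih =>
        obtain ⟨ih1, ih2⟩ := ih
        refine ⟨by rw [show 2*(k+1)+1 = 2*k+3 by ring]; exact ih2, ?_⟩
        have ha := hrec1 (2*k+1) (by omega)
        have hb' := hrec1 (2*k+2) (by omega)
        have hc := hrec1 (2*k+3) (by omega)
        have hdouble : X (2*k+5) = (4*t - 2) * X (2*k+3) - X (2*k+1) := by
          rw [show 2*k+1+2 = 2*k+3 by ring, show 2*k+1+1 = 2*k+2 by ring] at ha
          rw [show 2*k+2+2 = 2*k+4 by ring, show 2*k+2+1 = 2*k+3 by ring] at hb'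
          rw [show 2*k+3+2 = 2*k+5 by ring, show 2*k+3+1 = 2*k+4 by ring] at hc
          rw [htdef]
          linear_combination hc + 2*X₁*hb' + ha
        rw [show 2*(k+1)+3 = 2*k+5 by ring, hdouble, ih1, ih2, Aseq_rec]
        ring
    have hXl : X (2*k+1) = X₁ * Aseq t k := (hA k).1
    rw [hXl] at hEq
    set A : ℤ := Aseq t k with hAdef
    have hA13 : 13 ≤ A := Aseq_ge t (by nlinarith) k hk1
    have hAodd : Odd A := Aseq_odd t k
    have hAdvd : A ∣ 2^a * 3^b := hEq ▸ ⟨X₁, by ring⟩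
    obtain ⟨e, he⟩ := odd_dvd_pow23 A hAodd (by linarith) a b hAdvd
    have he2 : 2 ≤ e := by
      by_contra hcon
      push_neg at hcon
      interval_cases e
      · rw [pow_zero] at he; omega
      · rw [pow_one] at he; omega
    have h9A : (9:ℤ) ∣ A := by
      rw [he]
      have := pow_dvd_pow (3:ℤ) he2
      norm_num at this
      exact this
    have hA0 : ((A : ℤ) : ZMod 9) = 0 := (ZMod.intCast_zmod_eq_zero_iff_dvd _ 9).mpr h9A
    rw [hAdef, Aseq_cast] at hA0
    have : Aseq ((X₁ : ZMod 9)^2) k = 0 := by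
      rw [htdef] at hA0
      push_cast at hA0
      exact hA0
    exact mod9_claim (X₁ : ZMod 9) k (Finset.mem_Icc.mpr ⟨hk1, hk74⟩) hk3 this
end
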